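/- Let α ≥ 1, z ∈ ℝ^α and θ ∈ ℝ. Then Q₀₀[z](θ) = Σ_{l=0}^{⌈α/2⌉} ( Σ_{y ∈ Ξ_l^α} (−i)^{wt(y)} ζ_y(z) ) cos(lθ). In particular, z ↦ Q₀₀[z](θ) is determined by these Fourier coefficients and θ ↦ Q₀₀[z](θ) is a cosine polynomial of degree at most ⌈α/2⌉. -/

import Mathlib

/-!
Both `U(θ;a) = cos a − i sin a · P(θ)` and `V(b) = cos b − i sin b · Z` are of the form
`cos · 1 − i sin · ρ(g)` for the representation `ρ` of `C₂ * C₂ ≅ DihedralGroup 0` with `p ↦ Z`,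
`q ↦ P(θ) = Z · R(θ)` and `r i ↦ R(iθ)`, where `R` is a rotation matrix. Multiplying out `Q(θ;z)`
therefore gives `∑_y (−i)^{wt y} ζ_y(z) ρ(w(y))` over bit strings `y`. The `(0,0)` entry of `ρ(g)`
is `cos(lθ)` with `l = |i|` for `g = r i` or `g = sr i`; the elements with `|i| = l` are exactly the
reduced words defining `Ξ_l`, and `l ≤ ⌈α/2⌉` because only the letters `q`, which sit at the odd
positions, change `i`, each by `±1`.
-/

noncomputable section

/-- The Pauli matrix `X = !![0,1;1,0]`. -/
def Xm : Matrix (Fin 2) (Fin 2) ℂ := !![0, 1; 1, 0]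

/-- The Pauli matrix `Z = !![1,0;0,−1]`. -/
def Zm : Matrix (Fin 2) (Fin 2) ℂ := !![1, 0; 0, -1]

/-- `P(θ) = cos θ • Z + sin θ • X`. -/
def Pmat (θ : ℝ) : Matrix (Fin 2) (Fin 2) ℂ :=
  (Real.cos θ : ℂ) • Zm + (Real.sin θ : ℂ) • Xm

/-- `U(θ;α) = cos α • I − i sin α • P(θ)`. -/
def Umat (θ a : ℝ) : Matrix (Fin 2) (Fin 2) ℂ :=
  (Real.cos a : ℂ) • (1 : Matrix (Fin 2) (Fin 2) ℂ) - (Complex.I * (Real.sin a : ℂ)) • Pmat θ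

/-- `V(β) = cos β • I − i sin β • Z`. -/
def Vmat (b : ℝ) : Matrix (Fin 2) (Fin 2) ℂ :=
  (Real.cos b : ℂ) • (1 : Matrix (Fin 2) (Fin 2) ℂ) - (Complex.I * (Real.sin b : ℂ)) • Zm

/-- Auxiliary recursion for `Q(θ;z)`: the boolean flag records whether the position of
the head of the list is odd (odd positions use `U(θ;·)`, even positions use `V(·)`);
the head of the list is the *rightmost* factor. -/
def Qaux (θ : ℝ) : Bool → List ℝ → Matrix (Fin 2) (Fin 2) ℂ
  | _, [] => 1
  | odd, z :: rest => Qaux θ (!odd) rest * (if odd then Umat θ z else Vmat z)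

/-- `Q(θ; (z₁,…,z_m)) = R_m(z_m) ⋯ R₂(z₂) R₁(z₁)` with `R_j = U(θ;·)` for odd `j` and
`R_j = V(·)` for even `j`. -/
def Qmat (θ : ℝ) (zs : List ℝ) : Matrix (Fin 2) (Fin 2) ℂ := Qaux θ true zs

end

/-- The generator `p` of the infinite dihedral group `C₂ * C₂`, realized as the
reflection `sr 0` in `DihedralGroup 0`. -/
def pgen : DihedralGroup 0 := DihedralGroup.sr 0

/-- The generator `q` of the infinite dihedral group `C₂ * C₂`, realized as the
reflection `sr 1` in `DihedralGroup 0`. -/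
def qgen : DihedralGroup 0 := DihedralGroup.sr 1

/-- `g^b` for a bit `b`: `g⁰ = 1`, `g¹ = g`. -/
def bpow (g : DihedralGroup 0) (b : Bool) : DihedralGroup 0 := if b then g else 1

/-- The generator at (0-based) index `i`, i.e. at 1-based position `i+1`:
`q` at odd positions, `p` at even positions. -/
def genAt (i : ℕ) : DihedralGroup 0 := if i % 2 = 0 then qgen else pgen

/-- The word `w(x) = r_n^{x_n} ⋯ r_2^{x_2} r_1^{x_1}` associated with a bit string
`x = x₁…x_n`, where `r_i = q` if `i` is odd and `r_i = p` if `i` is even. -/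
def wword {n : ℕ} (x : Fin n → Bool) : DihedralGroup 0 :=
  ((List.finRange n).reverse.map (fun i => bpow (genAt i.val) (x i))).prod

/-- The reduced word `t(u,k,v) = p^u (qp)^k q^v`. -/
def tword (u : Bool) (k : ℕ) (v : Bool) : DihedralGroup 0 :=
  bpow pgen u * (qgen * pgen) ^ k * bpow qgen v

/-- `Θⁿ_{ukv}` : the set of bit strings `x` of length `n` with `w(x) = p^u (qp)^k q^v`,
empty by convention when `k < 0`. -/
def Theta (n : ℕ) (u : Bool) (k : ℤ) (v : Bool) : Finset (Fin n → Bool) :=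
  if k < 0 then ∅ else Finset.univ.filter (fun x => wword x = tword u k.toNat v)

/-- `Ξ_l^α = Θ^α_{0,l,0} ∪ Θ^α_{1,l,0} ∪ Θ^α_{0,l−1,1} ∪ Θ^α_{1,l−1,1}`. -/
def Xi (α l : ℕ) : Finset (Fin α → Bool) :=
  Theta α false l false ∪ Theta α true l false ∪
    Theta α false ((l : ℤ) - 1) true ∪ Theta α true ((l : ℤ) - 1) true

/-- `ζ_y(x) = ∏_{a: y_a=0} cos(x_a) · ∏_{b: y_b=1} sin(x_b)`. -/
noncomputable def zeta {k : ℕ} (y : Fin k → Bool) (x : Fin k → ℝ) : ℝ :=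
  ∏ i, (if y i then Real.sin (x i) else Real.cos (x i))

/-- The Hamming weight of a bit string. -/
def hwt {k : ℕ} (y : Fin k → Bool) : ℕ := (Finset.univ.filter (fun i => y i = true)).card

open DihedralGroup

noncomputable def rotMat (φ : ℝ) : Matrix (Fin 2) (Fin 2) ℂ :=
  !![(Real.cos φ : ℂ), Real.sin φ; -Real.sin φ, Real.cos φ]

lemma rotMat_zero : rotMat 0 = 1 := by
  simp [rotMat, Matrix.one_fin_two]

lemma rotMat_add (a b : ℝ) : rotMat (a + b) = rotMat a * rotMat b := by
  ext i j
  fin_cases i <;> fin_cases j <;> simp [rotMat, Real.cos_add, Real.sin_add] <;> ring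

lemma rotMat_mul_Zm (a : ℝ) : rotMat a * Zm = Zm * rotMat (-a) := by
  ext i j
  fin_cases i <;> fin_cases j <;> simp [rotMat, Zm]

lemma Zm_mul_self : Zm * Zm = 1 := by
  simp [Zm, Matrix.one_fin_two]

lemma rotMat_cast_sub_mul (i j : ZMod 0) (θ : ℝ) :
    rotMat ((j - i).cast * θ) = rotMat (-(i.cast * θ)) * rotMat (j.cast * θ) := by
  rw [← rotMat_add, ZMod.cast_sub (dvd_refl 0)]
  ring_nf

noncomputable def dihedralRep (θ : ℝ) : DihedralGroup 0 →* Matrix (Fin 2) (Fin 2) ℂ where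
  toFun
    | r i => rotMat (i.cast * θ)
    | sr i => Zm * rotMat (i.cast * θ)
  map_one' := by rw [one_def]; simp [rotMat_zero]
  map_mul'
    | r i, r j => by
      simp only [r_mul_r, ZMod.cast_add (dvd_refl 0), add_mul, rotMat_add]
    | r i, sr j => by
      simp only [r_mul_sr, rotMat_cast_sub_mul, ← mul_assoc, rotMat_mul_Zm]
    | sr i, r j => by
      simp only [sr_mul_r, ZMod.cast_add (dvd_refl 0), add_mul, rotMat_add, mul_assoc]
    | sr i, sr j => by
      rw [sr_mul_sr]
      dsimp only
      rw [rotMat_cast_sub_mul, mul_assoc Zm, ← mul_assoc (rotMat _) Zm, rotMat_mul_Zm, mul_assoc Zm,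
        ← mul_assoc Zm Zm, Zm_mul_self, one_mul]

lemma dihedralRep_pgen (θ : ℝ) : dihedralRep θ pgen = Zm := by
  simp [dihedralRep, pgen, rotMat_zero]

lemma dihedralRep_qgen (θ : ℝ) : dihedralRep θ qgen = Pmat θ := by
  ext i j
  fin_cases i <;> fin_cases j <;> simp [dihedralRep, qgen, rotMat, Pmat, Zm, Xm]

def rotIndex : DihedralGroup 0 → ℤ
  | r i => i.cast
  | sr i => i.cast

lemma rotIndex_r_intCast (m : ℤ) : rotIndex (r (Int.cast m)) = m :=
  ZMod.cast_intCast (R := ℤ) (dvd_refl 0) m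

lemma rotIndex_sr_intCast (m : ℤ) : rotIndex (sr (Int.cast m)) = m :=
  ZMod.cast_intCast (R := ℤ) (dvd_refl 0) m

lemma rotIndex_one : rotIndex 1 = 0 := by
  rw [one_def]
  exact ZMod.cast_zero (R := ℤ) (n := 0)

lemma dihedralRep_apply_zero_zero (θ : ℝ) (g : DihedralGroup 0) :
    dihedralRep θ g 0 0 = Real.cos ((rotIndex g).natAbs * θ) := by
  have hcos : Real.cos ((rotIndex g).natAbs * θ) = Real.cos (rotIndex g * θ) := by
    rcases Int.natAbs_eq (rotIndex g) with h | h <;> rw [h] <;> simp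
  rw [hcos]
  cases g <;> simp [dihedralRep, rotIndex, rotMat, Zm, ZMod.intCast_cast]

lemma rotIndex_pgen_mul (g : DihedralGroup 0) : rotIndex (pgen * g) = rotIndex g := by
  cases g <;> simp [pgen, rotIndex]

lemma natAbs_rotIndex_qgen_mul_le (g : DihedralGroup 0) :
    (rotIndex (qgen * g)).natAbs ≤ (rotIndex g).natAbs + 1 := by
  cases g <;> simp only [qgen, sr_mul_r, sr_mul_sr, rotIndex, ZMod.cast_add (dvd_refl 0),
    ZMod.cast_sub (dvd_refl 0), ZMod.cast_one (dvd_refl 0)] <;> omega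

lemma qgen_mul_pgen : qgen * pgen = r (-1) := by
  simp [qgen, pgen]

lemma tword_false_false (k : ℕ) : tword false k false = r (-(k : ZMod 0)) := by
  simp [tword, bpow, qgen_mul_pgen, r_pow]

lemma tword_true_false (k : ℕ) : tword true k false = sr (-(k : ZMod 0)) := by
  simp only [tword, bpow, qgen_mul_pgen, r_pow]
  simp [pgen]

lemma tword_false_true (k : ℕ) : tword false k true = sr ((k : ZMod 0) + 1) := by
  simp only [tword, bpow, qgen_mul_pgen, r_pow]
  simp only [Bool.false_eq_true, ↓reduceIte, neg_mul, one_mul, qgen, r_mul_sr, sub_neg_eq_add,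
    sr.injEq]
  ring

lemma tword_true_true (k : ℕ) : tword true k true = r ((k : ZMod 0) + 1) := by
  simp only [tword, bpow, ↓reduceIte, pgen, qgen, sr_mul_sr, zero_sub, r_pow, neg_mul, one_mul,
    sr_mul_r, zero_add, sub_neg_eq_add, r.injEq]
  ring

lemma natAbs_rotIndex_eq_iff (g : DihedralGroup 0) (l : ℕ) :
    (rotIndex g).natAbs = l ↔
      g = r (-(l : ZMod 0)) ∨ g = sr (-(l : ZMod 0)) ∨ g = sr l ∨ g = r l := by
  obtain ⟨m, rfl | rfl⟩ : ∃ m : ℤ, g = r (Int.cast m) ∨ g = sr (Int.cast m) := by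
    cases g with
    | r i => exact ⟨i.cast, .inl (by rw [ZMod.intCast_zmod_cast])⟩
    | sr i => exact ⟨i.cast, .inr (by rw [ZMod.intCast_zmod_cast])⟩
  all_goals
    simp only [rotIndex_r_intCast, rotIndex_sr_intCast, r.injEq, sr.injEq, reduceCtorEq,
      or_false, false_or]
    rw [show -(l : ZMod 0) = Int.cast (-l) by simp, show (l : ZMod 0) = Int.cast (l : ℤ) by simp]
    simp only [Int.cast_inj]
    omega

lemma mem_Theta_natCast {n : ℕ} (x : Fin n → Bool) (u : Bool) (k : ℕ) (v : Bool) :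
    x ∈ Theta n u k v ↔ wword x = tword u k v := by
  rw [Theta, if_neg (by omega)]
  simp

lemma Theta_neg_one (n : ℕ) (u v : Bool) : Theta n u (-1) v = ∅ := by
  simp [Theta]

open Finset in
lemma Xi_eq_filter (α l : ℕ) :
    Xi α l = univ.filter (fun y => (rotIndex (wword y)).natAbs = l) := by
  ext y
  simp only [mem_filter, mem_univ, true_and, natAbs_rotIndex_eq_iff]
  cases l with
  | zero =>
    rw [Xi, Nat.cast_zero, zero_sub, Theta_neg_one, Theta_neg_one, union_empty, union_empty,
      mem_union, ← Nat.cast_zero, mem_Theta_natCast, mem_Theta_natCast]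
    simp only [tword_false_false, tword_true_false, Nat.cast_zero, neg_zero]
    tauto
  | succ k =>
    have hk : ((k + 1 : ℕ) : ℤ) - 1 = k := by omega
    rw [Xi, hk]
    simp only [mem_union, mem_Theta_natCast]
    simp only [tword_false_false, tword_true_false, tword_false_true, tword_true_true,
      Nat.cast_succ]
    tauto

lemma wword_snoc {n : ℕ} (y : Fin n → Bool) (b : Bool) :
    wword (Fin.snoc y b : Fin (n + 1) → Bool) = bpow (genAt n) b * wword y := by
  simp [wword, List.finRange_succ_last, Function.comp_def]

lemma natAbs_rotIndex_wword_le {n : ℕ} (y : Fin n → Bool) :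
    (rotIndex (wword y)).natAbs ≤ (n + 1) / 2 := by
  induction n with
  | zero => simp [wword, rotIndex_one]
  | succ n ih =>
    rw [← Fin.snoc_init_self y, wword_snoc]
    have ih := ih (Fin.init y)
    cases y (Fin.last n) with
    | false => simp only [bpow, Bool.false_eq_true, ↓reduceIte, one_mul]; omega
    | true =>
      by_cases hn : n % 2 = 0
      · have := natAbs_rotIndex_qgen_mul_le (wword (Fin.init y))
        simp only [bpow, genAt, hn, ↓reduceIte]; omega
      · simp only [bpow, genAt, hn, ↓reduceIte, rotIndex_pgen_mul]; omega

lemma Qaux_append_singleton (θ a : ℝ) (b : Bool) (zs : List ℝ) :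
    Qaux θ b (zs ++ [a]) =
      (if b = decide (Even zs.length) then Umat θ a else Vmat a) * Qaux θ b zs := by
  induction zs generalizing b with
  | nil => cases b <;> simp [Qaux]
  | cons x zs ih =>
    simp only [List.cons_append, Qaux, ih, mul_assoc, List.length_cons, Nat.even_add_one]
    cases b <;> simp

lemma Qmat_ofFn_succ (θ : ℝ) {n : ℕ} (z : Fin (n + 1) → ℝ) :
    Qmat θ (List.ofFn z) =
      ((Real.cos (z (Fin.last n)) : ℂ) • 1 -
        (Complex.I * Real.sin (z (Fin.last n))) • dihedralRep θ (genAt n)) *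
        Qmat θ (List.ofFn (Fin.init z)) := by
  rw [List.ofFn_succ', List.concat_eq_append, Qmat, Qaux_append_singleton, List.length_ofFn]
  congr 1
  by_cases hn : n % 2 = 0
  · simp [Nat.even_iff, hn, genAt, dihedralRep_qgen, Umat]
  · simp [Nat.even_iff, hn, genAt, dihedralRep_pgen, Vmat]

noncomputable def pathAmplitude {n : ℕ} (z : Fin n → ℝ) (y : Fin n → Bool) : ℂ :=
  ∏ j, if y j then -Complex.I * Real.sin (z j) else Real.cos (z j)

lemma neg_I_pow_hwt_mul_zeta {n : ℕ} (z : Fin n → ℝ) (y : Fin n → Bool) :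
    (-Complex.I) ^ hwt y * (zeta y z : ℂ) = pathAmplitude z y := by
  rw [hwt, ← Finset.prod_const, Finset.prod_filter, zeta, Complex.ofReal_prod,
    ← Finset.prod_mul_distrib]
  refine Finset.prod_congr rfl fun j _ => ?_
  cases y j <;> simp

lemma Qmat_ofFn_eq_sum (θ : ℝ) {n : ℕ} (z : Fin n → ℝ) :
    Qmat θ (List.ofFn z) = ∑ y, pathAmplitude z y • dihedralRep θ (wword y) := by
  induction n with
  | zero => simp [Qmat, Qaux, pathAmplitude, wword]
  | succ n ih =>
    rw [Qmat_ofFn_succ, ih, ← (Fin.snocEquiv fun _ => Bool).sum_comp, Fintype.sum_prod_type,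
      Fintype.sum_bool, ← Finset.sum_add_distrib, Finset.mul_sum]
    refine Finset.sum_congr rfl fun y _ => ?_
    have hsnoc (b : Bool) : (Fin.snocEquiv fun _ => Bool) (b, y) = Fin.snoc y b := rfl
    simp only [hsnoc, wword_snoc, pathAmplitude, Fin.prod_univ_castSucc, Fin.snoc_castSucc,
      Fin.snoc_last, bpow, ↓reduceIte, Bool.false_eq_true, map_mul, map_one, Fin.init]
    simp only [sub_mul, smul_mul_assoc, one_mul, mul_smul_comm]
    module

theorem statement17_general (α : ℕ) (z : Fin α → ℝ) (θ : ℝ) :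
    Qmat θ (List.ofFn z) 0 0
      = ∑ l ∈ Finset.range ((α + 1) / 2 + 1),
          (∑ y ∈ Xi α l, (-Complex.I) ^ hwt y * (zeta y z : ℂ)) *
            (Real.cos (l * θ) : ℂ) := by
  have hmaps (y : Fin α → Bool) (_ : y ∈ Finset.univ) :
      (rotIndex (wword y)).natAbs ∈ Finset.range ((α + 1) / 2 + 1) :=
    Finset.mem_range_succ_iff.2 (natAbs_rotIndex_wword_le y)
  rw [Qmat_ofFn_eq_sum, Matrix.sum_apply, ← Finset.sum_fiberwise_of_maps_to hmaps]
  refine Finset.sum_congr rfl fun l _ => ?_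
  rw [Xi_eq_filter, Finset.sum_mul]
  refine Finset.sum_congr rfl fun y hy => ?_
  rw [Matrix.smul_apply, dihedralRep_apply_zero_zero, (Finset.mem_filter.1 hy).2,
    neg_I_pow_hwt_mul_zeta, smul_eq_mul]

/-- the Fourier-cosine expansion
`Q₀₀[z](θ) = Σ_{l=0}^{⌈α/2⌉} (Σ_{y ∈ Ξ_l^α} (−i)^{wt(y)} ζ_y(z)) cos(lθ)`. -/
theorem statement17 (α : ℕ) (hα : 1 ≤ α) (z : Fin α → ℝ) (θ : ℝ) :
    Qmat θ (List.ofFn z) 0 0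
      = ∑ l ∈ Finset.range ((α + 1) / 2 + 1),
          (∑ y ∈ Xi α l, (-Complex.I) ^ hwt y * (zeta y z : ℂ)) *
            (Real.cos (l * θ) : ℂ) :=
  statement17_general α z θ
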